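/- arXiv:2201.11075 — 6 statements merged into one kernel-verified Lean document; each statement's English description precedes it below -/
import Mathlib

section
/- Let p be an odd prime and K a field equipped with a nonarchimedean (ultrametric) multiplicative norm ‖·‖ such that ‖(p : K)‖ = p^{-1}. Let ρ, q ∈ K satisfy ‖ρ − 1‖ < p^{-1/(p−1)} and ‖q − 1‖ < p^{-1/(p−1)}. Then for every natural number n, ‖ρ^{p^n} − q^{p^n}‖ = p^{-n} · ‖ρ − q‖. -/
lemma key_step {K : Type*} [NormedField K] (p : ℕ) (hp : p.Prime)
    (hna : ∀ x y : K, ‖x + y‖ ≤ max ‖x‖ ‖y‖)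
    (hpK : ‖(p : K)‖ = (p : ℝ)⁻¹) (x y : K)
    (hx : ‖x - 1‖ < (p : ℝ) ^ (-(1 : ℝ) / ((p : ℝ) - 1)))
    (hy : ‖y - 1‖ < (p : ℝ) ^ (-(1 : ℝ) / ((p : ℝ) - 1))) :
    ‖x ^ p - y ^ p‖ = (p : ℝ)⁻¹ * ‖x - y‖ := by
  have hud : IsUltrametricDist K :=
    IsUltrametricDist.isUltrametricDist_of_forall_norm_add_le_max_norm hna
  set r : ℝ := (p : ℝ) ^ (-(1 : ℝ) / ((p : ℝ) - 1)) with hr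
  have hp1 : (1 : ℝ) < (p : ℝ) := by exact_mod_cast hp.one_lt
  have hp0 : (0 : ℝ) < (p : ℝ) := by positivity
  have hpne : (p : ℝ) - 1 ≠ 0 := by linarith
  have hrpow : r ^ (p - 1) = (p : ℝ)⁻¹ := by
    rw [hr, ← Real.rpow_natCast (_ ^ _), ← Real.rpow_mul hp0.le]
    have hc : ((p - 1 : ℕ) : ℝ) = (p : ℝ) - 1 := by
      push_cast [Nat.cast_sub hp.one_lt.le]; ring
    rw [hc]
    have : (-(1 : ℝ) / ((p : ℝ) - 1)) * ((p : ℝ) - 1) = -1 := by field_simp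
    rw [this, Real.rpow_neg_one]
  have hr1 : r < 1 := by
    rw [hr]
    exact Real.rpow_lt_one_of_one_lt_of_neg hp1
      (div_neg_of_neg_of_pos (by norm_num) (by linarith))
  have hy1 : ‖y‖ = 1 := by
    have h : y = (y - 1) + 1 := by ring
    rw [h, IsUltrametricDist.norm_add_eq_max_of_norm_ne_norm, norm_one, max_eq_right]
    · exact (hy.trans hr1).le
    · rw [norm_one]; exact (hy.trans hr1).ne
  have htle : ‖x - y‖ ≤ max ‖x - 1‖ ‖y - 1‖ := by
    have h : x - y = (x - 1) + -(y - 1) := by ring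
    rw [h]; simpa [norm_sub_rev] using hna (x - 1) (-(y - 1))
  have htr : ‖x - y‖ < r := htle.trans_lt (max_lt hx hy)
  have ht1 : ‖x - y‖ < 1 := htr.trans hr1
  set t : K := x - y with hts
  have hxy : x = y + t := by rw [hts]; ring
  have hexp : x ^ p - y ^ p =
      t * ∑ k ∈ Finset.range p, t ^ k * y ^ (p - (k + 1)) * (p.choose (k + 1) : K) := by
    rw [hxy, add_comm, add_pow, Finset.sum_range_succ']
    simp only [pow_zero, Nat.choose_zero_right, Nat.cast_one, mul_one, one_mul, Nat.sub_zero]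
    rw [add_sub_cancel_right, Finset.mul_sum]
    congr 1; ext k; ring
  set S := ∑ k ∈ Finset.range p, t ^ k * y ^ (p - (k + 1)) * (p.choose (k + 1) : K) with hS
  have hp2 : 2 ≤ p := hp.two_le
  set C : ℝ := max (‖t‖ * (p : ℝ)⁻¹) (‖t‖ ^ (p - 1)) with hC
  have hCp : C < (p : ℝ)⁻¹ := by
    apply max_lt
    · calc ‖t‖ * (p:ℝ)⁻¹ < 1 * (p:ℝ)⁻¹ := by
            apply mul_lt_mul_of_pos_right ht1 (by positivity)
        _ = (p:ℝ)⁻¹ := one_mul _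
    · rw [← hrpow]
      exact pow_lt_pow_left₀ htr (norm_nonneg _) (by omega)
  have hsplit : S = (y ^ (p - 1) * (p : K)) +
      ∑ k ∈ Finset.Ico 1 p, t ^ k * y ^ (p - (k + 1)) * (p.choose (k + 1) : K) := by
    rw [hS, Finset.range_eq_Ico, Finset.sum_eq_sum_Ico_succ_bot (by omega : 0 < p)]
    simp [Nat.choose_one_right]
  have hhead : ‖y ^ (p - 1) * (p : K)‖ = (p : ℝ)⁻¹ := by
    rw [norm_mul, norm_pow, hy1, one_pow, one_mul, hpK]
  have htail : ‖∑ k ∈ Finset.Ico 1 p, t ^ k * y ^ (p - (k + 1)) * (p.choose (k + 1) : K)‖ ≤ C := by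
    apply IsUltrametricDist.norm_sum_le_of_forall_le_of_nonempty
    · exact ⟨1, by simp; omega⟩
    · intro k hk
      simp only [Finset.mem_Ico] at hk
      rw [norm_mul, norm_mul, norm_pow, norm_pow, hy1, one_pow, mul_one]
      rcases eq_or_lt_of_le (Nat.succ_le_of_lt hk.2) with h | h
      · -- k + 1 = p
        have hk1 : k = p - 1 := by omega
        rw [hk1]
        simp only [Nat.sub_add_cancel hp.one_lt.le, Nat.choose_self, Nat.cast_one, norm_one,
          mul_one]
        exact le_max_right _ _
      · -- k + 1 < p
        have hdvd : p ∣ p.choose (k + 1) := hp.dvd_choose_self (by omega) (by omega)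
        obtain ⟨m, hm⟩ := hdvd
        have hnorm : ‖(p.choose (k + 1) : K)‖ ≤ (p : ℝ)⁻¹ := by
          rw [hm]
          push_cast
          rw [norm_mul, hpK]
          calc (p:ℝ)⁻¹ * ‖(m : K)‖ ≤ (p:ℝ)⁻¹ * 1 := by
                apply mul_le_mul_of_nonneg_left (IsUltrametricDist.norm_natCast_le_one K m)
                  (by positivity)
            _ = (p:ℝ)⁻¹ := mul_one _
        refine le_trans ?_ (le_max_left _ _)
        calc ‖t‖ ^ k * ‖(p.choose (k + 1) : K)‖ ≤ ‖t‖ ^ 1 * (p:ℝ)⁻¹ := by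
              apply mul_le_mul (pow_le_pow_of_le_one (norm_nonneg _) ht1.le hk.1) hnorm
                (norm_nonneg _) (by positivity)
          _ = ‖t‖ * (p:ℝ)⁻¹ := by rw [pow_one]
  have hSnorm : ‖S‖ = (p : ℝ)⁻¹ := by
    rw [hsplit, IsUltrametricDist.norm_add_eq_max_of_norm_ne_norm
      (by rw [hhead]; exact (htail.trans_lt hCp).ne')]
    rw [hhead, max_eq_left (htail.trans hCp.le)]
  rw [hexp, norm_mul, hSnorm, mul_comm]


/-- For an odd prime `p` and a nonarchimedean multiplicative norm on a field `K`
with `‖p‖ = p⁻¹`, if `‖ρ − 1‖ < p^{-1/(p−1)}` and `‖q − 1‖ < p^{-1/(p−1)}`, then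
`‖ρ^{p^n} − q^{p^n}‖ = p^{-n} · ‖ρ − q‖` for every `n`. -/
theorem norm_pow_pow_sub_pow_pow {K : Type*} [NormedField K]
    (p : ℕ) (hp : p.Prime) (hodd : Odd p)
    (hna : ∀ x y : K, ‖x + y‖ ≤ max ‖x‖ ‖y‖)
    (hpK : ‖(p : K)‖ = (p : ℝ)⁻¹)
    (ρ q : K)
    (hρ : ‖ρ - 1‖ < (p : ℝ) ^ (-(1 : ℝ) / ((p : ℝ) - 1)))
    (hq : ‖q - 1‖ < (p : ℝ) ^ (-(1 : ℝ) / ((p : ℝ) - 1)))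
    (n : ℕ) :
    ‖ρ ^ p ^ n - q ^ p ^ n‖ = (p : ℝ) ^ (-(n : ℤ)) * ‖ρ - q‖ := by
  have hp0 : (0 : ℝ) < (p : ℝ) := by exact_mod_cast hp.pos
  have hr0 : (0 : ℝ) < (p : ℝ) ^ (-(1 : ℝ) / ((p : ℝ) - 1)) := Real.rpow_pos_of_pos hp0 _
  have hone : ‖(1 : K) - 1‖ < (p : ℝ) ^ (-(1 : ℝ) / ((p : ℝ) - 1)) := by
    simpa using hr0
  have hstep : ∀ x : K, ‖x - 1‖ < (p : ℝ) ^ (-(1 : ℝ) / ((p : ℝ) - 1)) →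
      ‖x ^ p - 1‖ < (p : ℝ) ^ (-(1 : ℝ) / ((p : ℝ) - 1)) := by
    intro x hx
    have := key_step p hp hna hpK x 1 hx hone
    rw [one_pow] at this
    rw [this, sub_self, norm_zero] at *
    calc (p : ℝ)⁻¹ * ‖x - 1‖ ≤ 1 * ‖x - 1‖ := by
          apply mul_le_mul_of_nonneg_right _ (norm_nonneg _)
          rw [inv_le_one_iff₀]; right; exact_mod_cast hp.one_le
      _ = ‖x - 1‖ := one_mul _
      _ < _ := hx
  induction n generalizing ρ q with
  | zero => simp
  | succ n ih =>
    have h1 : ρ ^ p ^ (n + 1) = (ρ ^ p) ^ p ^ n := by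
      rw [← pow_mul, pow_succ, mul_comm]
    have h2 : q ^ p ^ (n + 1) = (q ^ p) ^ p ^ n := by
      rw [← pow_mul, pow_succ, mul_comm]
    rw [h1, h2, ih _ _ (hstep ρ hρ) (hstep q hq),
      key_step p hp hna hpK ρ q hρ hq]
    rw [← mul_assoc]
    congr 1
    rw [← zpow_neg_one (p:ℝ), ← zpow_add₀ (ne_of_gt hp0)]
    congr 1
    push_cast
    ring
end

section
/- Let p be an odd prime and K a field equipped with a nonarchimedean (ultrametric) multiplicative norm ‖·‖ such that ‖(p : K)‖ = p^{-1}. Let ρ, q ∈ K satisfy ρ ≠ q, ‖ρ − 1‖ < p^{-1/(p−1)} and ‖q − 1‖ < p^{-1/(p−1)}. Then for every natural number n, ‖[p^n]_{ρ,q}‖ = p^{-n}, where [m]_{ρ,q} := (ρ^m − q^m)/(ρ − q). -/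
/-!
On the disc `‖x - 1‖ ^ (p - 1) < ‖p‖` (which is `‖x - 1‖ < p ^ (-1 / (p - 1))` when `‖p‖ = p⁻¹`)
the map `x ↦ x ^ p` multiplies distances by exactly `‖p‖`. Indeed, in the binomial expansion of
`(1 + u) ^ p - 1` the linear term `p * u` strictly dominates: the middle terms are divisible by `p`
and the last one is `u ^ p`, with `‖u‖ ^ (p - 1) < ‖p‖`. Writing `a ^ p - b ^ p` as
`b ^ p * ((a / b) ^ p - 1)` with `‖b‖ = 1` gives `‖a ^ p - b ^ p‖ = ‖p‖ * ‖a - b‖`. The disc is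
stable under `x ↦ x ^ p`, so iterating gives `‖ρ ^ p ^ n - q ^ p ^ n‖ = ‖p‖ ^ n * ‖ρ - q‖`.
-/

/-- The (ρ,q)-number `[m]_{ρ,q} = (ρ^m - q^m)/(ρ - q)`. -/
noncomputable def pqNum {K : Type*} [Field K] (ρ q : K) (m : ℕ) : K :=
  (ρ ^ m - q ^ m) / (ρ - q)

open Finset IsUltrametricDist

lemma one_add_pow_sub_one_eq {R : Type*} [CommRing R] {p : ℕ} (hp : 2 ≤ p) (u : R) :
    (1 + u) ^ p - 1 = p * u + ∑ k ∈ range (p - 1), u ^ (k + 2) * (p.choose (k + 2) : R) := by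
  rw [add_comm, add_pow, show p + 1 = p - 1 + 2 by omega, sum_range_succ', sum_range_succ']
  simp only [add_assoc, Nat.reduceAdd, one_pow, mul_one, zero_add, pow_one, Nat.choose_one_right,
    pow_zero, tsub_zero, Nat.choose_zero_right, Nat.cast_one]
  ring

section Ultrametric

variable {K : Type*} [NormedField K] [IsUltrametricDist K] {p : ℕ}

lemma norm_add_eq_left_of_norm_lt {a b : K} (h : ‖b‖ < ‖a‖) : ‖a + b‖ = ‖a‖ := by
  rw [norm_add_eq_max_of_norm_ne_norm h.ne', max_eq_left h.le]

lemma norm_eq_one_of_norm_sub_one_lt_one {a : K} (h : ‖a - 1‖ < 1) : ‖a‖ = 1 := by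
  simpa using norm_add_eq_left_of_norm_lt (a := (1 : K)) (b := a - 1) (by simpa using h)

lemma norm_lt_one_of_pow_lt_norm_natCast (hp : p.Prime) {u : K} (hu : ‖u‖ ^ (p - 1) < ‖(p : K)‖) :
    ‖u‖ < 1 :=
  (pow_lt_one_iff_of_nonneg (norm_nonneg u) (Nat.sub_ne_zero_of_lt hp.one_lt)).mp
    (hu.trans_le (norm_natCast_le_one K p))

lemma norm_pow_mul_choose_lt (hp : p.Prime) {u : K} (hu0 : u ≠ 0)
    (hu : ‖u‖ ^ (p - 1) < ‖(p : K)‖) {k : ℕ} (hk2 : 2 ≤ k) (hkp : k ≤ p) :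
    ‖u ^ k * (p.choose k : K)‖ < ‖(p : K)‖ * ‖u‖ := by
  have hu_pos : 0 < ‖u‖ := norm_pos_iff.mpr hu0
  rw [norm_mul, norm_pow]
  rcases hkp.lt_or_eq with hlt | rfl
  · have hu1 := norm_lt_one_of_pow_lt_norm_natCast hp hu
    have hchoose : ‖(p.choose k : K)‖ ≤ ‖(p : K)‖ := by
      obtain ⟨m, hm⟩ := hp.dvd_choose_self (by omega) hlt
      rw [hm, Nat.cast_mul, norm_mul]
      exact mul_le_of_le_one_right (norm_nonneg _) (norm_natCast_le_one K m)
    calc ‖u‖ ^ k * ‖(p.choose k : K)‖ ≤ ‖u‖ ^ 2 * ‖(p : K)‖ :=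
          mul_le_mul (pow_le_pow_of_le_one (norm_nonneg u) hu1.le hk2) hchoose (norm_nonneg _)
            (by positivity)
      _ < ‖u‖ * ‖(p : K)‖ := by
          have hp_pos : 0 < ‖(p : K)‖ := (pow_nonneg (norm_nonneg u) _).trans_lt hu
          gcongr
          nlinarith
      _ = ‖(p : K)‖ * ‖u‖ := mul_comm _ _
  · calc ‖u‖ ^ k * ‖(k.choose k : K)‖ = ‖u‖ ^ (k - 1) * ‖u‖ := by
          rw [Nat.choose_self, Nat.cast_one, norm_one, mul_one, ← pow_succ,
            Nat.sub_add_cancel (by omega)]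
      _ < ‖(k : K)‖ * ‖u‖ := mul_lt_mul_of_pos_right hu hu_pos

lemma norm_one_add_pow_sub_one (hp : p.Prime) {u : K} (hu : ‖u‖ ^ (p - 1) < ‖(p : K)‖) :
    ‖(1 + u) ^ p - 1‖ = ‖(p : K)‖ * ‖u‖ := by
  rcases eq_or_ne u 0 with rfl | hu0
  · simp
  have htail : ‖∑ k ∈ range (p - 1), u ^ (k + 2) * (p.choose (k + 2) : K)‖ < ‖(p : K) * u‖ := by
    have hne : (range (p - 1)).Nonempty := nonempty_range_iff.mpr (Nat.sub_ne_zero_of_lt hp.one_lt)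
    rw [norm_mul]
    refine (hne.norm_sum_le_sup'_norm _).trans_lt ((sup'_lt_iff hne).mpr fun k hk => ?_)
    exact norm_pow_mul_choose_lt hp hu0 hu (Nat.le_add_left 2 k) (by have := mem_range.mp hk; omega)
  rw [one_add_pow_sub_one_eq hp.two_le, norm_add_eq_left_of_norm_lt htail, norm_mul]

lemma norm_pow_sub_pow (hp : p.Prime) {a b : K} (ha : ‖a - 1‖ ^ (p - 1) < ‖(p : K)‖)
    (hb : ‖b - 1‖ ^ (p - 1) < ‖(p : K)‖) : ‖a ^ p - b ^ p‖ = ‖(p : K)‖ * ‖a - b‖ := by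
  have hb1 : ‖b‖ = 1 :=
    norm_eq_one_of_norm_sub_one_lt_one (norm_lt_one_of_pow_lt_norm_natCast hp hb)
  have hb0 : b ≠ 0 := norm_ne_zero_iff.mp (by simp [hb1])
  have hab : ‖(a - b) / b‖ ^ (p - 1) < ‖(p : K)‖ := by
    have hle : ‖a - b‖ ≤ max ‖a - 1‖ ‖b - 1‖ := by
      simpa only [dist_eq_norm, norm_sub_rev 1 b] using IsUltrametricDist.dist_triangle_max a 1 b
    rw [norm_div, hb1, div_one]
    rcases max_choice ‖a - 1‖ ‖b - 1‖ with h | h <;> rw [h] at hle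
    exacts [(pow_le_pow_left₀ (norm_nonneg _) hle _).trans_lt ha,
      (pow_le_pow_left₀ (norm_nonneg _) hle _).trans_lt hb]
  have hfactor : a ^ p - b ^ p = b ^ p * ((1 + (a - b) / b) ^ p - 1) := by
    rw [show 1 + (a - b) / b = a / b by field_simp; ring, div_pow, mul_sub,
      mul_div_cancel₀ _ (pow_ne_zero p hb0), mul_one]
  rw [hfactor, norm_mul, norm_pow, hb1, one_pow, one_mul, norm_one_add_pow_sub_one hp hab, norm_div,
    hb1, div_one]

lemma norm_pow_sub_one_pow_lt (hp : p.Prime) {a : K} (ha : ‖a - 1‖ ^ (p - 1) < ‖(p : K)‖) :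
    ‖a ^ p - 1‖ ^ (p - 1) < ‖(p : K)‖ := by
  have hle : ‖a ^ p - 1‖ ≤ ‖a - 1‖ := by
    have h := norm_one_add_pow_sub_one hp ha
    rw [add_sub_cancel] at h
    rw [h]
    exact mul_le_of_le_one_left (norm_nonneg _) (norm_natCast_le_one K p)
  exact (pow_le_pow_left₀ (norm_nonneg _) hle _).trans_lt ha

lemma norm_pow_prime_pow_sub_pow (hp : p.Prime) {a b : K} (ha : ‖a - 1‖ ^ (p - 1) < ‖(p : K)‖)
    (hb : ‖b - 1‖ ^ (p - 1) < ‖(p : K)‖) (n : ℕ) :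
    ‖a ^ p ^ n - b ^ p ^ n‖ = ‖(p : K)‖ ^ n * ‖a - b‖ := by
  induction n generalizing a b with
  | zero => simp
  | succ n ih =>
    rw [pow_succ', pow_mul, pow_mul,
      ih (norm_pow_sub_one_pow_lt hp ha) (norm_pow_sub_one_pow_lt hp hb), norm_pow_sub_pow hp ha hb,
      pow_succ, mul_assoc]

end Ultrametric

lemma pow_sub_one_lt_inv_of_lt_rpow {p : ℕ} (hp : 1 < p) {x : ℝ} (hx0 : 0 ≤ x)
    (hx : x < (p : ℝ) ^ (-(1 : ℝ) / ((p : ℝ) - 1))) : x ^ (p - 1) < (p : ℝ)⁻¹ := by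
  have hp' : (1 : ℝ) < p := by exact_mod_cast hp
  calc x ^ (p - 1) < ((p : ℝ) ^ (-(1 : ℝ) / ((p : ℝ) - 1))) ^ (p - 1) :=
        pow_lt_pow_left₀ hx hx0 (Nat.sub_ne_zero_of_lt hp)
    _ = (p : ℝ)⁻¹ := by
        rw [← Real.rpow_natCast, ← Real.rpow_mul (by positivity), Nat.cast_sub hp.le, Nat.cast_one,
          div_mul_cancel₀ _ (by linarith), Real.rpow_neg_one]

theorem norm_pqNum_pow_prime_general {K : Type*} [NormedField K]
    (p : ℕ) (hp : p.Prime)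
    (hna : ∀ x y : K, ‖x + y‖ ≤ max ‖x‖ ‖y‖)
    (hpK : ‖(p : K)‖ = (p : ℝ)⁻¹)
    (ρ q : K) (hρq : ρ ≠ q)
    (hρ : ‖ρ - 1‖ < (p : ℝ) ^ (-(1 : ℝ) / ((p : ℝ) - 1)))
    (hq : ‖q - 1‖ < (p : ℝ) ^ (-(1 : ℝ) / ((p : ℝ) - 1)))
    (n : ℕ) :
    ‖pqNum ρ q (p ^ n)‖ = (p : ℝ) ^ (-(n : ℤ)) := by
  have : IsUltrametricDist K := isUltrametricDist_of_forall_norm_add_le_max_norm hna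
  have hdisc : ∀ x : K, ‖x - 1‖ < (p : ℝ) ^ (-(1 : ℝ) / ((p : ℝ) - 1)) →
      ‖x - 1‖ ^ (p - 1) < ‖(p : K)‖ := fun x hx =>
    hpK ▸ pow_sub_one_lt_inv_of_lt_rpow hp.one_lt (norm_nonneg _) hx
  rw [pqNum, norm_div, norm_pow_prime_pow_sub_pow hp (hdisc ρ hρ) (hdisc q hq), hpK,
    mul_div_cancel_right₀ _ (norm_ne_zero_iff.mpr (sub_ne_zero.mpr hρq)), zpow_neg, zpow_natCast,
    inv_pow]

/-- For an odd prime `p` and a nonarchimedean multiplicative norm on a field `K`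
with `‖p‖ = p⁻¹`, if `ρ ≠ q`, `‖ρ − 1‖ < p^{-1/(p−1)}` and `‖q − 1‖ < p^{-1/(p−1)}`,
then `‖[p^n]_{ρ,q}‖ = p^{-n}` for every `n`. -/
theorem norm_pqNum_pow_prime {K : Type*} [NormedField K]
    (p : ℕ) (hp : p.Prime) (hodd : Odd p)
    (hna : ∀ x y : K, ‖x + y‖ ≤ max ‖x‖ ‖y‖)
    (hpK : ‖(p : K)‖ = (p : ℝ)⁻¹)
    (ρ q : K) (hρq : ρ ≠ q)
    (hρ : ‖ρ - 1‖ < (p : ℝ) ^ (-(1 : ℝ) / ((p : ℝ) - 1)))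
    (hq : ‖q - 1‖ < (p : ℝ) ^ (-(1 : ℝ) / ((p : ℝ) - 1)))
    (n : ℕ) :
    ‖pqNum ρ q (p ^ n)‖ = (p : ℝ) ^ (-(n : ℤ)) :=
  norm_pqNum_pow_prime_general p hp hna hpK ρ q hρq hρ hq n
end

section
/- Let p be an odd prime, K a field with a nonarchimedean multiplicative norm ‖·‖ satisfying ‖(p : K)‖ = p^{-1}, and ρ, q ∈ K with ρ ≠ q, ‖ρ − 1‖ < p^{-1/(p−1)} and ‖q − 1‖ < p^{-1/(p−1)}. Let μ : ℤ_p × ℕ → K and C ≥ 0 be such that ‖[p^n]_{ρ,q} μ(x,n) − [p^{n+1}]_{ρ,q} μ(x,n+1)‖ ≤ C · ‖ρ^{p^n} − q^{p^n}‖ for all x ∈ ℤ_p and n ∈ ℕ. Then for all x ∈ ℤ_p and all natural numbers m ≤ n, ‖[p^n]_{ρ,q} μ(x,n) − [p^m]_{ρ,q} μ(x,m)‖ ≤ C · p^{-m} · ‖ρ − q‖. -/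
section AuxNA

variable {K : Type*} [NormedField K]

lemma na_sum (hna : ∀ x y : K, ‖x + y‖ ≤ max ‖x‖ ‖y‖) {ι : Type*} (s : Finset ι)
    (f : ι → K) (B : ℝ) (hB : 0 ≤ B) (h : ∀ i ∈ s, ‖f i‖ ≤ B) :
    ‖∑ i ∈ s, f i‖ ≤ B := by
  classical
  induction s using Finset.cons_induction with
  | empty => simpa
  | cons a s ha ih =>
      rw [Finset.sum_cons]
      exact le_trans (hna _ _) (max_le (h a (Finset.mem_cons_self _ _))
        (ih fun i hi => h i (Finset.mem_cons_of_mem hi)))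

lemma na_nat (hna : ∀ x y : K, ‖x + y‖ ≤ max ‖x‖ ‖y‖) (n : ℕ) : ‖(n : K)‖ ≤ 1 := by
  induction n with
  | zero => simp
  | succ n ih =>
      push_cast
      exact le_trans (hna _ _) (max_le ih (by simp))

lemma pow_sub_pow_le (hna : ∀ x y : K, ‖x + y‖ ≤ max ‖x‖ ‖y‖)
    (x y : K) (M : ℝ) (hx : ‖x‖ ≤ M) (hy : ‖y‖ ≤ M) (k : ℕ) :
    ‖x ^ k - y ^ k‖ ≤ ‖x - y‖ * M ^ (k - 1) := by
  have hM : 0 ≤ M := le_trans (norm_nonneg x) hx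
  rw [← geom_sum₂_mul, norm_mul, mul_comm]
  refine mul_le_mul_of_nonneg_left ?_ (norm_nonneg _)
  refine na_sum hna _ _ _ (pow_nonneg hM _) ?_
  intro i hi
  rw [Finset.mem_range] at hi
  rw [norm_mul, norm_pow, norm_pow]
  calc ‖x‖ ^ i * ‖y‖ ^ (k - 1 - i) ≤ M ^ i * M ^ (k - 1 - i) :=
        mul_le_mul (pow_le_pow_left₀ (norm_nonneg _) hx i)
          (pow_le_pow_left₀ (norm_nonneg _) hy _) (by positivity) (by positivity)
    _ = M ^ (k - 1) := by rw [← pow_add]; congr 1; omega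

lemma step_le (hna : ∀ x y : K, ‖x + y‖ ≤ max ‖x‖ ‖y‖) {p : ℕ} (hp : p.Prime)
    (hpK : ‖(p : K)‖ = (p : ℝ)⁻¹) {M : ℝ} (hM1 : M ≤ 1) (hMp : M ^ (p - 1) ≤ (p : ℝ)⁻¹)
    {a b : K} (ha : ‖a - 1‖ ≤ M) (hb : ‖b - 1‖ ≤ M) :
    ‖a ^ p - b ^ p‖ ≤ (p : ℝ)⁻¹ * ‖a - b‖ := by
  have hM0 : 0 ≤ M := le_trans (norm_nonneg _) ha
  have hab : a - b = (a - 1) - (b - 1) := by ring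
  have key : a ^ p - b ^ p
      = ∑ k ∈ Finset.range (p + 1), ((a - 1) ^ k - (b - 1) ^ k) * (p.choose k : K) := by
    have h1 : a ^ p = ((a - 1) + 1) ^ p := by ring_nf
    have h2 : b ^ p = ((b - 1) + 1) ^ p := by ring_nf
    rw [h1, h2, add_pow, add_pow, ← Finset.sum_sub_distrib]
    refine Finset.sum_congr rfl fun k _ => by ring
  rw [key]
  refine na_sum hna _ _ _ (by positivity) ?_
  intro k hk
  rw [Finset.mem_range] at hk
  rcases Nat.eq_zero_or_pos k with rfl | hk1
  · simp
    positivity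
  rw [norm_mul]
  rcases eq_or_lt_of_le (Nat.lt_succ_iff.mp hk) with rfl | hkp
  · -- k = p
    rw [Nat.choose_self]
    push_cast
    rw [norm_one, mul_one, hab]
    calc ‖(a-1) ^ k - (b-1) ^ k‖ ≤ ‖(a-1) - (b-1)‖ * M ^ (k - 1) :=
          pow_sub_pow_le hna _ _ M ha hb k
      _ ≤ ‖(a-1) - (b-1)‖ * (k : ℝ)⁻¹ := by gcongr
      _ = (k : ℝ)⁻¹ * ‖(a-1) - (b-1)‖ := mul_comm _ _
  · -- 1 ≤ k < p
    obtain ⟨c, hc⟩ := hp.dvd_choose_self hk1.ne' hkp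
    have hcn : ‖(p.choose k : K)‖ ≤ (p : ℝ)⁻¹ := by
      rw [hc]
      push_cast
      rw [norm_mul, hpK]
      calc (p:ℝ)⁻¹ * ‖(c : K)‖ ≤ (p:ℝ)⁻¹ * 1 := by
            gcongr
            exact na_nat hna c
        _ = (p:ℝ)⁻¹ := mul_one _
    have h1 : ‖(a-1) ^ k - (b-1) ^ k‖ ≤ ‖a - b‖ := by
      rw [hab]
      calc ‖(a-1) ^ k - (b-1) ^ k‖ ≤ ‖(a-1) - (b-1)‖ * M ^ (k - 1) :=
            pow_sub_pow_le hna _ _ M ha hb k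
        _ ≤ ‖(a-1) - (b-1)‖ * 1 := by
            gcongr
            exact pow_le_one₀ hM0 hM1
        _ = ‖(a-1) - (b-1)‖ := mul_one _
    calc ‖(a-1) ^ k - (b-1) ^ k‖ * ‖(p.choose k : K)‖ ≤ ‖a - b‖ * (p : ℝ)⁻¹ :=
          mul_le_mul h1 hcn (norm_nonneg _) (norm_nonneg _)
      _ = (p : ℝ)⁻¹ * ‖a - b‖ := mul_comm _ _

lemma pow_sub_one_le (hna : ∀ x y : K, ‖x + y‖ ≤ max ‖x‖ ‖y‖) {a : K}
    (ha : ‖a - 1‖ ≤ 1) (k : ℕ) : ‖a ^ k - 1‖ ≤ ‖a - 1‖ := by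
  have h1 : a ^ k - 1 = a ^ k - 1 ^ k := by rw [one_pow]
  rw [h1]
  calc ‖a ^ k - 1 ^ k‖ ≤ ‖a - 1‖ * (1 : ℝ) ^ (k - 1) :=
        pow_sub_pow_le hna a 1 1 (by
          calc ‖a‖ = ‖(a - 1) + 1‖ := by ring_nf
            _ ≤ max ‖a - 1‖ ‖(1 : K)‖ := hna _ _
            _ ≤ 1 := max_le ha (by simp)) (by simp) k
    _ = ‖a - 1‖ := by rw [one_pow, mul_one]

lemma iter_le (hna : ∀ x y : K, ‖x + y‖ ≤ max ‖x‖ ‖y‖) {p : ℕ} (hp : p.Prime)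
    (hpK : ‖(p : K)‖ = (p : ℝ)⁻¹) {M : ℝ} (hM1 : M ≤ 1) (hMp : M ^ (p - 1) ≤ (p : ℝ)⁻¹)
    {a b : K} (ha : ‖a - 1‖ ≤ M) (hb : ‖b - 1‖ ≤ M) (n : ℕ) :
    ‖a ^ p ^ n - b ^ p ^ n‖ ≤ ((p : ℝ)⁻¹) ^ n * ‖a - b‖ := by
  induction n with
  | zero => simp
  | succ n ih =>
      have ha' : ‖a ^ p ^ n - 1‖ ≤ M :=
        le_trans (pow_sub_one_le hna (ha.trans hM1) _) ha
      have hb' : ‖b ^ p ^ n - 1‖ ≤ M :=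
        le_trans (pow_sub_one_le hna (hb.trans hM1) _) hb
      have hstep := step_le hna hp hpK hM1 hMp ha' hb'
      have hpow : a ^ p ^ (n + 1) = (a ^ p ^ n) ^ p := by
        rw [← pow_mul, pow_succ]
      have hpow' : b ^ p ^ (n + 1) = (b ^ p ^ n) ^ p := by
        rw [← pow_mul, pow_succ]
      calc ‖a ^ p ^ (n+1) - b ^ p ^ (n+1)‖ = ‖(a ^ p ^ n) ^ p - (b ^ p ^ n) ^ p‖ := by
            rw [hpow, hpow']
        _ ≤ (p : ℝ)⁻¹ * ‖a ^ p ^ n - b ^ p ^ n‖ := hstep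
        _ ≤ (p : ℝ)⁻¹ * (((p : ℝ)⁻¹) ^ n * ‖a - b‖) := by gcongr
        _ = ((p : ℝ)⁻¹) ^ (n + 1) * ‖a - b‖ := by ring

end AuxNA

/-- If `μ` satisfies the strong (ρ,q)-invariance estimate
`‖[p^n] μ(x,n) − [p^{n+1}] μ(x,n+1)‖ ≤ C ‖ρ^{p^n} − q^{p^n}‖`, then for all `m ≤ n`,
`‖[p^n] μ(x,n) − [p^m] μ(x,m)‖ ≤ C p^{-m} ‖ρ − q‖`. -/
theorem strong_invariant_cauchy_estimate {K : Type*} [NormedField K]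
    (p : ℕ) [Fact p.Prime] (hodd : Odd p)
    (hna : ∀ x y : K, ‖x + y‖ ≤ max ‖x‖ ‖y‖)
    (hpK : ‖(p : K)‖ = (p : ℝ)⁻¹)
    (ρ q : K) (hρq : ρ ≠ q)
    (hρ : ‖ρ - 1‖ < (p : ℝ) ^ (-(1 : ℝ) / ((p : ℝ) - 1)))
    (hq : ‖q - 1‖ < (p : ℝ) ^ (-(1 : ℝ) / ((p : ℝ) - 1)))
    (μ : ℤ_[p] × ℕ → K) (C : ℝ) (hC : 0 ≤ C)
    (hμ : ∀ (x : ℤ_[p]) (n : ℕ),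
      ‖pqNum ρ q (p ^ n) * μ (x, n) - pqNum ρ q (p ^ (n + 1)) * μ (x, n + 1)‖
        ≤ C * ‖ρ ^ p ^ n - q ^ p ^ n‖) :
    ∀ (x : ℤ_[p]) (m n : ℕ), m ≤ n →
      ‖pqNum ρ q (p ^ n) * μ (x, n) - pqNum ρ q (p ^ m) * μ (x, m)‖
        ≤ C * (p : ℝ) ^ (-(m : ℤ)) * ‖ρ - q‖ := by
  have hp : p.Prime := Fact.out
  have hp1 : (1 : ℝ) < (p : ℝ) := by exact_mod_cast hp.one_lt
  have hp0 : (0 : ℝ) < (p : ℝ) := lt_trans one_pos hp1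
  set r₀ : ℝ := (p : ℝ) ^ (-(1 : ℝ) / ((p : ℝ) - 1)) with hr₀
  set M : ℝ := max ‖ρ - 1‖ ‖q - 1‖ with hMdef
  have hM0 : 0 ≤ M := le_trans (norm_nonneg _) (le_max_left _ _)
  have hMr : M < r₀ := max_lt hρ hq
  have hr1 : r₀ ≤ 1 := by
    apply Real.rpow_le_one_of_one_le_of_nonpos hp1.le
    apply div_nonpos_of_nonpos_of_nonneg (by norm_num)
    linarith
  have hM1 : M ≤ 1 := hMr.le.trans hr1
  have hrp : r₀ ^ (p - 1) = (p : ℝ)⁻¹ := by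
    rw [hr₀, ← Real.rpow_natCast ((p : ℝ) ^ (-(1 : ℝ) / ((p : ℝ) - 1))) (p - 1),
      ← Real.rpow_mul hp0.le]
    have hcast : ((p - 1 : ℕ) : ℝ) = (p : ℝ) - 1 := by
      rw [Nat.cast_sub hp.one_le]; norm_num
    rw [hcast, div_mul_cancel₀ _ (by linarith : (p : ℝ) - 1 ≠ 0)]
    rw [Real.rpow_neg_one]
  have hMp : M ^ (p - 1) ≤ (p : ℝ)⁻¹ := by
    rw [← hrp]
    exact pow_le_pow_left₀ hM0 hMr.le _
  have hiter : ∀ n : ℕ, ‖ρ ^ p ^ n - q ^ p ^ n‖ ≤ ((p : ℝ)⁻¹) ^ n * ‖ρ - q‖ :=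
    iter_le hna hp hpK hM1 hMp (le_max_left _ _) (le_max_right _ _)
  intro x m n hmn
  induction n, hmn using Nat.le_induction with
  | base => rw [sub_self, norm_zero]; positivity
  | succ n hmn ih =>
      have hzpow : ((p : ℝ)⁻¹) ^ m = (p : ℝ) ^ (-(m : ℤ)) := by
        rw [zpow_neg, zpow_natCast, inv_pow]
      have h1 : ‖pqNum ρ q (p ^ (n + 1)) * μ (x, n + 1) - pqNum ρ q (p ^ n) * μ (x, n)‖
          ≤ C * (p : ℝ) ^ (-(m : ℤ)) * ‖ρ - q‖ := by
        calc ‖pqNum ρ q (p ^ (n + 1)) * μ (x, n + 1) - pqNum ρ q (p ^ n) * μ (x, n)‖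
            = ‖pqNum ρ q (p ^ n) * μ (x, n) - pqNum ρ q (p ^ (n + 1)) * μ (x, n + 1)‖ :=
              norm_sub_rev _ _
          _ ≤ C * ‖ρ ^ p ^ n - q ^ p ^ n‖ := hμ x n
          _ ≤ C * (((p : ℝ)⁻¹) ^ n * ‖ρ - q‖) :=
              mul_le_mul_of_nonneg_left (hiter n) hC
          _ ≤ C * (((p : ℝ)⁻¹) ^ m * ‖ρ - q‖) := by
              have : ((p : ℝ)⁻¹) ^ n ≤ ((p : ℝ)⁻¹) ^ m :=
                pow_le_pow_of_le_one (by positivity) (inv_le_one_of_one_le₀ hp1.le) hmn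
              have h2 : ((p : ℝ)⁻¹) ^ n * ‖ρ - q‖ ≤ ((p : ℝ)⁻¹) ^ m * ‖ρ - q‖ :=
                mul_le_mul_of_nonneg_right this (norm_nonneg _)
              exact mul_le_mul_of_nonneg_left h2 hC
          _ = C * (p : ℝ) ^ (-(m : ℤ)) * ‖ρ - q‖ := by rw [hzpow]; ring
      have hsplit : pqNum ρ q (p ^ (n + 1)) * μ (x, n + 1) - pqNum ρ q (p ^ m) * μ (x, m)
          = (pqNum ρ q (p ^ (n + 1)) * μ (x, n + 1) - pqNum ρ q (p ^ n) * μ (x, n))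
            + (pqNum ρ q (p ^ n) * μ (x, n) - pqNum ρ q (p ^ m) * μ (x, m)) := by ring
      rw [hsplit]
      exact le_trans (hna _ _) (max_le h1 ih)
end

section
/- Let p be an odd prime, K a complete field with a nonarchimedean multiplicative norm ‖·‖, and ρ, q ∈ K with ρ ≠ q. Let μ : ℤ_p × ℕ → K be weakly p-adic (ρ,q)-invariant, i.e., there is a sequence δ : ℕ → ℝ with δ_n → 0 such that ‖[p^n]_{ρ,q} μ(x,n) − [p^{n+1}]_{ρ,q} μ(x,n+1)‖ ≤ δ_n for all x ∈ ℤ_p and n ∈ ℕ. Then there exists a function f : ℤ_p → K such that the sequence of functions x ↦ [p^n]_{ρ,q} μ(x,n) converges to f uniformly on ℤ_p as n → ∞. -/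
/-- If `μ` is weakly p-adic (ρ,q)-invariant, then the functions
`x ↦ [p^n]_{ρ,q} μ(x,n)` converge uniformly on `ℤ_p` to some `f : ℤ_p → K`. -/
theorem weakly_invariant_tendstoUniformly {K : Type*} [NormedField K] [CompleteSpace K]
    (p : ℕ) [Fact p.Prime] (hodd : Odd p)
    (hna : ∀ x y : K, ‖x + y‖ ≤ max ‖x‖ ‖y‖)
    (ρ q : K) (hρq : ρ ≠ q)
    (μ : ℤ_[p] × ℕ → K) (δ : ℕ → ℝ)
    (hδ : Filter.Tendsto δ Filter.atTop (nhds 0))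
    (hμ : ∀ (x : ℤ_[p]) (n : ℕ),
      ‖pqNum ρ q (p ^ n) * μ (x, n) - pqNum ρ q (p ^ (n + 1)) * μ (x, n + 1)‖ ≤ δ n) :
    ∃ f : ℤ_[p] → K,
      TendstoUniformly (fun (n : ℕ) (x : ℤ_[p]) => pqNum ρ q (p ^ n) * μ (x, n)) f
        Filter.atTop := by
  set g : ℕ → ℤ_[p] → K := fun n x => pqNum ρ q (p ^ n) * μ (x, n) with hg
  -- Key uniform Cauchy estimate
  have key : ∀ ε : ℝ, 0 < ε → ∃ N : ℕ, ∀ (x : ℤ_[p]) (n : ℕ), N ≤ n →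
      ∀ m, n ≤ m → ‖g n x - g m x‖ ≤ ε := by
    intro ε hε
    obtain ⟨N, hN⟩ := Metric.tendsto_atTop.mp hδ ε hε
    refine ⟨N, fun x n hn m hm => ?_⟩
    induction m, hm using Nat.le_induction with
    | base => simp [le_of_lt hε]
    | succ m hm ih =>
      have h1 : ‖g m x - g (m + 1) x‖ ≤ δ m := hμ x m
      have h2 : δ m < ε := by
        have := hN m (le_trans hn hm)
        rw [Real.dist_eq, sub_zero] at this
        exact lt_of_le_of_lt (le_abs_self _) this
      have h3 : g n x - g (m + 1) x = (g n x - g m x) + (g m x - g (m + 1) x) := by ring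
      calc ‖g n x - g (m + 1) x‖ ≤ max ‖g n x - g m x‖ ‖g m x - g (m + 1) x‖ := by
            rw [h3]; exact hna _ _
        _ ≤ ε := max_le ih (le_of_lt (lt_of_le_of_lt h1 h2))
  -- Pointwise Cauchy, hence pointwise limit
  have hcau : ∀ x : ℤ_[p], CauchySeq (fun n => g n x) := by
    intro x
    rw [Metric.cauchySeq_iff']
    intro ε hε
    obtain ⟨N, hN⟩ := key (ε / 2) (half_pos hε)
    refine ⟨N, fun n hn => ?_⟩
    have := hN x N le_rfl n hn
    rw [dist_eq_norm, ← norm_neg]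
    simpa using lt_of_le_of_lt this (half_lt_self hε)
  have hf : ∀ x : ℤ_[p], ∃ l : K, Filter.Tendsto (fun n => g n x) Filter.atTop (nhds l) :=
    fun x => cauchySeq_tendsto_of_complete (hcau x)
  choose f hf using hf
  refine ⟨f, ?_⟩
  rw [Metric.tendstoUniformly_iff]
  intro ε hε
  obtain ⟨N, hN⟩ := key (ε / 2) (half_pos hε)
  filter_upwards [Filter.eventually_ge_atTop N] with n hn x
  have hle : dist (f x) (g n x) ≤ ε / 2 := by
    have htend : Filter.Tendsto (fun m => dist (g m x) (g n x)) Filter.atTop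
        (nhds (dist (f x) (g n x))) := ((hf x).dist tendsto_const_nhds)
    refine le_of_tendsto htend ?_
    filter_upwards [Filter.eventually_ge_atTop n] with m hm
    rw [dist_eq_norm, ← norm_neg]
    simpa using hN x n hn m hm
  exact lt_of_le_of_lt hle (half_lt_self hε)
end

section
/- (Theorem 3.1) Let p be an odd prime, K a complete field with a nonarchimedean multiplicative norm ‖·‖ satisfying ‖(p : K)‖ = p^{-1}, and ρ, q ∈ K with ρ ≠ q, ‖ρ − 1‖ < p^{-1/(p−1)} and ‖q − 1‖ < p^{-1/(p−1)}. Let μ : ℤ_p × ℕ → K satisfy: (i) μ(x,n) = μ(y,n) whenever ‖x − y‖_p ≤ p^{-n} (μ is constant on balls), and (ii) there is C > 0 with ‖[p^n]_{ρ,q} μ(x,n) − [p^{n+1}]_{ρ,q} μ(x,n+1)‖ ≤ C · ‖ρ^{p^n} − q^{p^n}‖ for all x ∈ ℤ_p, n ∈ ℕ (μ is strongly (ρ,q)-invariant). Then there exist a function f_μ : ℤ_p → K and a constant C₁ ≥ 0 such that for every x ∈ ℤ_p the sequence [p^n]_{ρ,q} μ(x,n) converges to f_μ(x) as n → ∞,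 and ‖f_μ(x) − f_μ(y)‖ ≤ C₁ · ‖x − y‖_p for all x, y ∈ ℤ_p (f_μ is a Lipschitz function). -/
section Ultrametric

open IsUltrametricDist

variable {R : Type*} [NormedCommRing R] [NormOneClass R] [IsUltrametricDist R] {p : ℕ}

lemma norm_choose_prime_le (hp : p.Prime) {i : ℕ} (hi0 : i ≠ 0) (hip : i < p) :
    ‖(p.choose i : R)‖ ≤ ‖(p : R)‖ := by
  obtain ⟨t, ht⟩ := hp.dvd_choose_self hi0 hip
  rw [ht, Nat.cast_mul]
  exact (norm_mul_le _ _).trans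
    (mul_le_of_le_one_right (norm_nonneg _) (norm_natCast_le_one R t))

lemma norm_pow_prime_sub_one_le (hp : p.Prime) {u : R} (hu : ‖u - 1‖ ^ (p - 1) ≤ ‖(p : R)‖) :
    ‖u ^ p - 1‖ ≤ ‖(p : R)‖ * ‖u - 1‖ := by
  set x := u - 1
  have hx1 : ‖x‖ ≤ 1 := by
    refine (pow_le_one_iff_of_nonneg (norm_nonneg x) (Nat.sub_ne_zero_of_lt hp.one_lt)).mp ?_
    exact hu.trans (norm_natCast_le_one R p)
  have hexpand : u ^ p - 1 = ∑ i ∈ Finset.range p, x ^ (i + 1) * (p.choose (i + 1) : R) := by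
    rw [show u = x + 1 by ring, add_pow, Finset.sum_range_succ']
    simp
  rw [hexpand]
  refine norm_sum_le_of_forall_le_of_nonneg (by positivity) fun i hi => ?_
  refine (norm_mul_le _ _).trans ?_
  rcases Nat.lt_or_eq_of_le (Finset.mem_range.mp hi : i + 1 ≤ p) with hip | hip
  · calc ‖x ^ (i + 1)‖ * ‖(p.choose (i + 1) : R)‖ ≤ ‖x‖ * ‖(p : R)‖ := by
          gcongr
          · exact (norm_pow_le x _).trans (pow_le_of_le_one (norm_nonneg x) hx1 i.succ_ne_zero)
          · exact norm_choose_prime_le hp i.succ_ne_zero hip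
      _ = ‖(p : R)‖ * ‖x‖ := mul_comm _ _
  · rw [show i + 1 = p from hip, Nat.choose_self, Nat.cast_one, norm_one, mul_one]
    calc ‖x ^ p‖ ≤ ‖x‖ ^ (p - 1) * ‖x‖ := by
          rw [← pow_succ, Nat.sub_add_cancel hp.one_le]; exact norm_pow_le x p
      _ ≤ ‖(p : R)‖ * ‖x‖ := by gcongr

lemma norm_pow_prime_pow_sub_one_le (hp : p.Prime) {u : R} (hu : ‖u - 1‖ ^ (p - 1) ≤ ‖(p : R)‖)
    (n : ℕ) : ‖u ^ p ^ n - 1‖ ≤ ‖(p : R)‖ ^ n * ‖u - 1‖ := by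
  induction n with
  | zero => simp
  | succ n ih =>
    have hp1 : ‖(p : R)‖ ≤ 1 := norm_natCast_le_one R p
    have hsmall : ‖u ^ p ^ n - 1‖ ≤ ‖u - 1‖ :=
      ih.trans (mul_le_of_le_one_left (norm_nonneg _) (pow_le_one₀ (norm_nonneg _) hp1))
    calc ‖u ^ p ^ (n + 1) - 1‖ = ‖(u ^ p ^ n) ^ p - 1‖ := by rw [pow_succ, pow_mul]
      _ ≤ ‖(p : R)‖ * ‖u ^ p ^ n - 1‖ :=
          norm_pow_prime_sub_one_le hp ((pow_le_pow_left₀ (norm_nonneg _) hsmall _).trans hu)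
      _ ≤ ‖(p : R)‖ * (‖(p : R)‖ ^ n * ‖u - 1‖) := by gcongr
      _ = ‖(p : R)‖ ^ (n + 1) * ‖u - 1‖ := by ring

lemma norm_pow_prime_pow_sub_pow_le (hp : p.Prime) {ρ q : R}
    (hρ : ‖ρ - 1‖ ^ (p - 1) ≤ ‖(p : R)‖) (hq : ‖q - 1‖ ^ (p - 1) ≤ ‖(p : R)‖) (n : ℕ) :
    ‖ρ ^ p ^ n - q ^ p ^ n‖ ≤ ‖(p : R)‖ ^ n * max ‖ρ - 1‖ ‖q - 1‖ := by
  rw [show ρ ^ p ^ n - q ^ p ^ n = (ρ ^ p ^ n - 1) + -(q ^ p ^ n - 1) by ring,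
    mul_max_of_nonneg _ _ (by positivity)]
  refine (norm_add_le_max _ _).trans (max_le_max ?_ ?_)
  · exact norm_pow_prime_pow_sub_one_le hp hρ n
  · exact (norm_neg _).trans_le (norm_pow_prime_pow_sub_one_le hp hq n)

end Ultrametric

lemma pow_pred_le_inv_of_le_rpow {p : ℕ} (hp : 1 < p) {t : ℝ} (ht0 : 0 ≤ t)
    (ht : t ≤ (p : ℝ) ^ (-(1 : ℝ) / ((p : ℝ) - 1))) : t ^ (p - 1) ≤ (p : ℝ)⁻¹ := by
  have hp1 : (1 : ℝ) < p := by exact_mod_cast hp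
  calc t ^ (p - 1) ≤ ((p : ℝ) ^ (-(1 : ℝ) / ((p : ℝ) - 1))) ^ (p - 1) := by gcongr
    _ = (p : ℝ)⁻¹ := by
      rw [← Real.rpow_natCast, ← Real.rpow_mul (by positivity), Nat.cast_pred (by omega),
        div_mul_cancel₀ _ (by linarith), Real.rpow_neg_one]

open Filter Topology

theorem PadicInt.exists_tendsto_lipschitz_of_norm_sub_le_geometric {E : Type*}
    [NormedAddCommGroup E] [CompleteSpace E] {p : ℕ} [Fact p.Prime] (a : ℤ_[p] → ℕ → E) (B : ℝ)
    (hstep : ∀ x (n : ℕ), ‖a x n - a x (n + 1)‖ ≤ B * ((p : ℝ)⁻¹) ^ n)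
    (hball : ∀ x y (n : ℕ), ‖x - y‖ ≤ (p : ℝ) ^ (-(n : ℤ)) → a x n = a y n) :
    ∃ (f : ℤ_[p] → E) (C₁ : ℝ), 0 ≤ C₁ ∧ (∀ x, Tendsto (a x) atTop (𝓝 (f x))) ∧
      ∀ x y, ‖f x - f y‖ ≤ C₁ * ‖x - y‖ := by
  set r : ℝ := (p : ℝ)⁻¹
  have hr1 : r < 1 := inv_lt_one_of_one_lt₀ (by exact_mod_cast (Fact.out : p.Prime).one_lt)
  have hB : 0 ≤ B := by simpa using (norm_nonneg _).trans (hstep 0 0)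
  have hdist : ∀ x n, dist (a x n) (a x (n + 1)) ≤ B * r ^ n := fun x n =>
    (dist_eq_norm _ _).trans_le (hstep x n)
  choose f hf using fun x =>
    cauchySeq_tendsto_of_complete (cauchySeq_of_le_geometric r B hr1 (hdist x))
  have htail : ∀ x n, ‖a x n - f x‖ ≤ B * r ^ n / (1 - r) := fun x n =>
    (dist_eq_norm _ _).symm.trans_le
      (dist_le_of_le_geometric_of_tendsto r B hr1 (hdist x) (hf x) n)
  have hC₁ : 0 ≤ 2 * (B / (1 - r)) := by have := sub_pos.mpr hr1; positivity
  refine ⟨f, 2 * (B / (1 - r)), hC₁, hf, fun x y => ?_⟩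
  rcases eq_or_ne x y with rfl | hxy
  · simp
  set n := (x - y).valuation
  have hnorm : ‖x - y‖ = (p : ℝ) ^ (-(n : ℤ)) :=
    PadicInt.norm_eq_zpow_neg_valuation (sub_ne_zero.mpr hxy)
  calc ‖f x - f y‖ = ‖(a y n - f y) - (a x n - f x)‖ := by rw [hball x y n hnorm.le]; abel_nf
    _ ≤ B * r ^ n / (1 - r) + B * r ^ n / (1 - r) :=
        (norm_sub_le _ _).trans (add_le_add (htail y n) (htail x n))
    _ = 2 * (B / (1 - r)) * ‖x - y‖ := by rw [hnorm, zpow_neg, zpow_natCast, inv_pow]; ring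

theorem radonNikodym_derivative_lipschitz_general {K : Type*} [NormedField K] [CompleteSpace K]
    (p : ℕ) [Fact p.Prime]
    (hna : ∀ x y : K, ‖x + y‖ ≤ max ‖x‖ ‖y‖)
    (hpK : ‖(p : K)‖ = (p : ℝ)⁻¹)
    (ρ q : K)
    (hρ : ‖ρ - 1‖ < (p : ℝ) ^ (-(1 : ℝ) / ((p : ℝ) - 1)))
    (hq : ‖q - 1‖ < (p : ℝ) ^ (-(1 : ℝ) / ((p : ℝ) - 1)))
    (μ : ℤ_[p] × ℕ → K)
    (hball : ∀ (x y : ℤ_[p]) (n : ℕ), ‖x - y‖ ≤ (p : ℝ) ^ (-(n : ℤ)) → μ (x, n) = μ (y, n))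
    (C : ℝ) (hC : 0 < C)
    (hstrong : ∀ (x : ℤ_[p]) (n : ℕ),
      ‖pqNum ρ q (p ^ n) * μ (x, n) - pqNum ρ q (p ^ (n + 1)) * μ (x, n + 1)‖
        ≤ C * ‖ρ ^ p ^ n - q ^ p ^ n‖) :
    ∃ (fμ : ℤ_[p] → K) (C₁ : ℝ), 0 ≤ C₁ ∧
      (∀ x : ℤ_[p],
        Filter.Tendsto (fun n : ℕ => pqNum ρ q (p ^ n) * μ (x, n)) Filter.atTop
          (nhds (fμ x))) ∧
      (∀ x y : ℤ_[p], ‖fμ x - fμ y‖ ≤ C₁ * ‖x - y‖) := by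
  have hp : p.Prime := Fact.out
  have : IsUltrametricDist K :=
    IsUltrametricDist.isUltrametricDist_of_forall_norm_add_le_max_norm hna
  have hsmall : ∀ u : K, ‖u - 1‖ < (p : ℝ) ^ (-(1 : ℝ) / ((p : ℝ) - 1)) →
      ‖u - 1‖ ^ (p - 1) ≤ ‖(p : K)‖ := fun u hu =>
    hpK ▸ pow_pred_le_inv_of_le_rpow hp.one_lt (norm_nonneg _) hu.le
  have hdecay (n : ℕ) : ‖ρ ^ p ^ n - q ^ p ^ n‖ ≤ max ‖ρ - 1‖ ‖q - 1‖ * ((p : ℝ)⁻¹) ^ n := by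
    rw [mul_comm, ← hpK]
    exact norm_pow_prime_pow_sub_pow_le hp (hsmall ρ hρ) (hsmall q hq) n
  refine PadicInt.exists_tendsto_lipschitz_of_norm_sub_le_geometric
    (fun x n => pqNum ρ q (p ^ n) * μ (x, n)) (C * max ‖ρ - 1‖ ‖q - 1‖)
    (fun x n => ?_) (fun x y n h => by rw [hball x y n h])
  rw [mul_assoc]
  exact (hstrong x n).trans (mul_le_mul_of_nonneg_left (hdecay n) hC.le)

/-- Theorem 3.1: if `μ` is a strongly (ρ,q)-invariant p-adic distribution on `ℤ_p`
(constant on balls of radius `p^{-n}`), then its (ρ,q)-Radon–Nikodym derivative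
`f_μ(x) = lim_n [p^n]_{ρ,q} μ(x,n)` exists and is a Lipschitz function. -/
theorem radonNikodym_derivative_lipschitz {K : Type*} [NormedField K] [CompleteSpace K]
    (p : ℕ) [Fact p.Prime] (hodd : Odd p)
    (hna : ∀ x y : K, ‖x + y‖ ≤ max ‖x‖ ‖y‖)
    (hpK : ‖(p : K)‖ = (p : ℝ)⁻¹)
    (ρ q : K) (hρq : ρ ≠ q)
    (hρ : ‖ρ - 1‖ < (p : ℝ) ^ (-(1 : ℝ) / ((p : ℝ) - 1)))
    (hq : ‖q - 1‖ < (p : ℝ) ^ (-(1 : ℝ) / ((p : ℝ) - 1)))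
    (μ : ℤ_[p] × ℕ → K)
    (hball : ∀ (x y : ℤ_[p]) (n : ℕ), ‖x - y‖ ≤ (p : ℝ) ^ (-(n : ℤ)) → μ (x, n) = μ (y, n))
    (C : ℝ) (hC : 0 < C)
    (hstrong : ∀ (x : ℤ_[p]) (n : ℕ),
      ‖pqNum ρ q (p ^ n) * μ (x, n) - pqNum ρ q (p ^ (n + 1)) * μ (x, n + 1)‖
        ≤ C * ‖ρ ^ p ^ n - q ^ p ^ n‖) :
    ∃ (fμ : ℤ_[p] → K) (C₁ : ℝ), 0 ≤ C₁ ∧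
      (∀ x : ℤ_[p],
        Filter.Tendsto (fun n : ℕ => pqNum ρ q (p ^ n) * μ (x, n)) Filter.atTop
          (nhds (fμ x))) ∧
      (∀ x y : ℤ_[p], ‖fμ x - fμ y‖ ≤ C₁ * ‖x - y‖) :=
  radonNikodym_derivative_lipschitz_general p hna hpK ρ q hρ hq μ hball C hC hstrong
end

section
/- (Identity in the proof of Theorem 3.2) Let p be an odd prime, K a normed field, and ρ, q ∈ K with ρ ≠ 0, ρ ≠ q, and ρ^{p^N} ≠ q^{p^N} for all natural numbers N. Let f : ℤ_p → K and let a, n be natural numbers with a < p^n. Suppose the sequence M ↦ (ρ^{p^{n+M}} / [p^M]_{ρ^{p^n}, q^{p^n}}) · Σ_{i=0}^{p^M−1} f(a + p^n·i) · ((q/ρ)^{p^n})^i converges to I ∈ K (i.e., the (ρ^{p^n}, q^{p^n})-Volkenborn integral of x ↦ f(a + p^n x) exists and equals I). Then the sequence N ↦ (ρ^{p^N}/[p^N]_{ρ,q}) · Σ_{x=0}^{p^N−1} [p^n divides x − a] · f(x) · (q/ρ)^x converges, and its limit μ̃_{f,ρ,q}(a + p^nℤ_p) equals (q/ρ)^a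 · I / [p^n]_{ρ,q}. -/
open scoped Classical in
/-- The `N`-th partial Riemann sum defining `μ̃_{f,ρ,q}(a + p^n ℤ_p)`, namely
`(ρ^{p^N}/[p^N]_{ρ,q}) · Σ_{x=0}^{p^N−1} [p^n ∣ x − a] f(x) (q/ρ)^x`. -/
noncomputable def muTildeSeq (p : ℕ) [Fact p.Prime] {K : Type*} [Field K]
    (ρ q : K) (f : ℤ_[p] → K) (a n N : ℕ) : K :=
  (ρ ^ p ^ N / pqNum ρ q (p ^ N)) *
    ∑ x ∈ Finset.range (p ^ N),
      if (p : ℤ_[p]) ^ n ∣ ((x : ℤ_[p]) - (a : ℤ_[p])) then f x * (q / ρ) ^ x else 0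

/-- Key identity in the proof of Theorem 3.2: if the
`(ρ^{p^n}, q^{p^n})`-Volkenborn integral of `x ↦ f(a + p^n x)`, i.e. the limit of
`M ↦ (ρ^{p^{n+M}}/[p^M]_{ρ^{p^n},q^{p^n}}) Σ_{i=0}^{p^M−1} f(a + p^n i) ((q/ρ)^{p^n})^i`,
exists and equals `I`, then `μ̃_{f,ρ,q}(a + p^nℤ_p)` exists and equals
`(q/ρ)^a · I / [p^n]_{ρ,q}`. -/
theorem muTilde_eq_shifted_integral {K : Type*} [NormedField K]
    (p : ℕ) [Fact p.Prime] (hodd : Odd p)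
    (ρ q : K) (hρ0 : ρ ≠ 0) (hρq : ρ ≠ q)
    (hpq : ∀ N : ℕ, ρ ^ p ^ N ≠ q ^ p ^ N)
    (f : ℤ_[p] → K) (a n : ℕ) (han : a < p ^ n) (I : K)
    (hI : Filter.Tendsto
      (fun M : ℕ => (ρ ^ p ^ (n + M) / pqNum (ρ ^ p ^ n) (q ^ p ^ n) (p ^ M)) *
        ∑ i ∈ Finset.range (p ^ M),
          f ((a : ℤ_[p]) + (p : ℤ_[p]) ^ n * (i : ℤ_[p])) * ((q / ρ) ^ p ^ n) ^ i)
      Filter.atTop (nhds I)) :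
    Filter.Tendsto (muTildeSeq p ρ q f a n) Filter.atTop
      (nhds ((q / ρ) ^ a * I / pqNum ρ q (p ^ n))) := by
  classical
  have hρq' : ρ - q ≠ 0 := sub_ne_zero.mpr hρq
  have hsub : ∀ m : ℕ, ρ ^ p ^ m - q ^ p ^ m ≠ 0 := fun m => sub_ne_zero.mpr (hpq m)
  have hD : pqNum ρ q (p ^ n) ≠ 0 := div_ne_zero (hsub n) hρq'
  have hpn : 0 < p ^ n := pow_pos (Fact.out (p := p.Prime)).pos n
  -- the sequence in `hI`
  set T : ℕ → K := fun M : ℕ => (ρ ^ p ^ (n + M) / pqNum (ρ ^ p ^ n) (q ^ p ^ n) (p ^ M)) *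
        ∑ i ∈ Finset.range (p ^ M),
          f ((a : ℤ_[p]) + (p : ℤ_[p]) ^ n * (i : ℤ_[p])) * ((q / ρ) ^ p ^ n) ^ i with hT
  -- key identity for N = n + M
  have key : ∀ M : ℕ, muTildeSeq p ρ q f a n (n + M) =
      (q / ρ) ^ a / pqNum ρ q (p ^ n) * T M := by
    intro M
    unfold muTildeSeq
    -- rewrite the filtered sum as a sum over an image
    have himg : (Finset.range (p ^ (n + M))).filter
        (fun x : ℕ => (p : ℤ_[p]) ^ n ∣ ((x : ℤ_[p]) - (a : ℤ_[p]))) =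
        (Finset.range (p ^ M)).image (fun i : ℕ => a + p ^ n * i) := by
      ext x
      simp only [Finset.mem_filter, Finset.mem_image, Finset.mem_range]
      have hdvd : ((p : ℤ_[p]) ^ n ∣ ((x : ℤ_[p]) - (a : ℤ_[p]))) ↔ a ≡ x [MOD p ^ n] := by
        have : ((x : ℤ_[p]) - (a : ℤ_[p])) = (((x : ℤ) - (a : ℤ) : ℤ) : ℤ_[p]) := by push_cast; ring
        rw [this, PadicInt.pow_p_dvd_int_iff, Nat.modEq_iff_dvd]
        push_cast
        rfl
      rw [hdvd]
      constructor
      · rintro ⟨hx, hmod⟩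
        refine ⟨x / p ^ n, ?_, ?_⟩
        · rw [Nat.div_lt_iff_lt_mul hpn, ← pow_add]
          rwa [Nat.add_comm M n]
        · have hxmod : x % p ^ n = a := by
            have := (Nat.ModEq.symm hmod)
            unfold Nat.ModEq at this
            rw [this, Nat.mod_eq_of_lt han]
          conv_rhs => rw [← Nat.div_add_mod x (p ^ n)]
          rw [hxmod]; ring
      · rintro ⟨i, hi, rfl⟩
        constructor
        · calc a + p ^ n * i < p ^ n + p ^ n * i := by omega
            _ = p ^ n * (i + 1) := by ring
            _ ≤ p ^ n * p ^ M := by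
                exact Nat.mul_le_mul_left _ (by omega)
            _ = p ^ (n + M) := by rw [pow_add]
        · simp [Nat.ModEq, Nat.add_mul_mod_self_left]
    have hinj : Set.InjOn (fun i : ℕ => a + p ^ n * i) (Finset.range (p ^ M)) := by
      intro i _ j _ h
      simp only at h
      have : p ^ n * i = p ^ n * j := by omega
      exact Nat.eq_of_mul_eq_mul_left hpn this
    rw [← Finset.sum_filter, himg, Finset.sum_image hinj]
    have hterm : ∀ i ∈ Finset.range (p ^ M),
        f ((a + p ^ n * i : ℕ) : ℤ_[p]) * (q / ρ) ^ (a + p ^ n * i) =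
        (q / ρ) ^ a * (f ((a : ℤ_[p]) + (p : ℤ_[p]) ^ n * (i : ℤ_[p])) * ((q / ρ) ^ p ^ n) ^ i) := by
      intro i _
      have hc : ((a + p ^ n * i : ℕ) : ℤ_[p]) = (a : ℤ_[p]) + (p : ℤ_[p]) ^ n * (i : ℤ_[p]) := by
        push_cast; ring
      rw [hc, pow_add, pow_mul]
      ring
    rw [Finset.sum_congr rfl hterm, ← Finset.mul_sum, hT]
    -- now the coefficient identity
    have hcoef : ρ ^ p ^ (n + M) / pqNum ρ q (p ^ (n + M)) * (q / ρ) ^ a =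
        (q / ρ) ^ a / pqNum ρ q (p ^ n) *
          (ρ ^ p ^ (n + M) / pqNum (ρ ^ p ^ n) (q ^ p ^ n) (p ^ M)) := by
      have h1 : (ρ ^ p ^ n) ^ p ^ M = ρ ^ p ^ (n + M) := by
        rw [← pow_mul, ← pow_add]
      have h2 : (q ^ p ^ n) ^ p ^ M = q ^ p ^ (n + M) := by
        rw [← pow_mul, ← pow_add]
      have hE : pqNum (ρ ^ p ^ n) (q ^ p ^ n) (p ^ M) ≠ 0 := by
        unfold pqNum
        rw [h1, h2]
        exact div_ne_zero (hsub (n + M)) (hsub n)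
      have hmul : pqNum ρ q (p ^ (n + M)) =
          pqNum ρ q (p ^ n) * pqNum (ρ ^ p ^ n) (q ^ p ^ n) (p ^ M) := by
        unfold pqNum
        rw [h1, h2, div_mul_div_comm, mul_comm (ρ - q),
          mul_div_mul_left _ _ (hsub n)]
      rw [hmul]
      field_simp
    calc ρ ^ p ^ (n + M) / pqNum ρ q (p ^ (n + M)) *
          ((q / ρ) ^ a * ∑ i ∈ Finset.range (p ^ M),
            f ((a : ℤ_[p]) + (p : ℤ_[p]) ^ n * (i : ℤ_[p])) * ((q / ρ) ^ p ^ n) ^ i)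
        = (ρ ^ p ^ (n + M) / pqNum ρ q (p ^ (n + M)) * (q / ρ) ^ a) *
          ∑ i ∈ Finset.range (p ^ M),
            f ((a : ℤ_[p]) + (p : ℤ_[p]) ^ n * (i : ℤ_[p])) * ((q / ρ) ^ p ^ n) ^ i := by ring
      _ = _ := by rw [hcoef]; ring
  -- limit of the rescaled shifted sequence
  have hshift : Filter.Tendsto (fun N : ℕ => (q / ρ) ^ a / pqNum ρ q (p ^ n) * T (N - n))
      Filter.atTop (nhds ((q / ρ) ^ a * I / pqNum ρ q (p ^ n))) := by
    have h1 : Filter.Tendsto (fun N : ℕ => T (N - n)) Filter.atTop (nhds I) :=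
      hI.comp (Filter.tendsto_sub_atTop_nat n)
    have := h1.const_mul ((q / ρ) ^ a / pqNum ρ q (p ^ n))
    convert this using 2
    ring
  refine hshift.congr' ?_
  filter_upwards [Filter.eventually_ge_atTop n] with N hN
  have : N = n + (N - n) := by omega
  rw [this, key (N - n)]
  congr 2
  omega
end
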